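/- arXiv:2501.18259 — 3 statements merged into one kernel-verified Lean document; each statement's English description precedes it below -/
import Mathlib

section
/- Let p_1 < p_2 < ... < p_r be primes with p_1 ≥ (r+2)/2. Then 3·φ(p_1·p_2⋯p_r) ≥ p_1·p_2⋯p_r, with equality if and only if r = 2, p_1 = 2 and p_2 = 3. -/
/-!
Since `p i ≥ p 0 + i`, each factor `1 - 1/p i` of `φ(N)/N` is at least `1 - 1/(p 0 + i)`, and
these lower bounds telescope to `φ(N)/N ≥ (p 0 - 1)/(p 0 - 1 + r)`, which is `≥ 1/3` exactly when
`r + 2 ≤ 2 p 0`. If `3 φ(N) = N` then `N` is even because `φ(N)` is, so `p 0 = 2`; the hypothesis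
then forces `r ≤ 2`, and the cases `r = 1, 2` are checked by hand.
-/

open Finset
open scoped Nat

theorem Nat.totient_prod_of_prime {ι : Type*} (s : Finset ι) (p : ι → ℕ)
    (hp : ∀ i ∈ s, (p i).Prime) (hinj : Set.InjOn p s) :
    φ (∏ i ∈ s, p i) = ∏ i ∈ s, (p i - 1) := by
  classical
  induction s using Finset.induction_on with
  | empty => simp
  | insert j s hj ih =>
    rw [coe_insert, Set.injOn_insert hj] at hinj
    have hpj := hp j (mem_insert_self j s)
    have hcop : (p j).Coprime (∏ i ∈ s, p i) := Nat.Coprime.prod_right fun i hi =>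
      (Nat.coprime_primes hpj (hp i (mem_insert_of_mem hi))).2 fun h =>
        hinj.2 (h ▸ Set.mem_image_of_mem p hi)
    rw [prod_insert hj, prod_insert hj, Nat.totient_mul hcop, Nat.totient_prime hpj,
      ih (fun i hi => hp i (mem_insert_of_mem hi)) hinj.1]

theorem StrictMonoOn.add_le_nat {p : ℕ → ℕ} {r i : ℕ} (hp : StrictMonoOn p (Set.Iio r))
    (hi : i < r) : p 0 + i ≤ p i := by
  induction i with
  | zero => rfl
  | succ i ih =>
    have := hp (show i < r by omega) hi (Nat.lt_succ_self i)
    have := ih (by omega)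
    omega

/-- The extremal case `q i = a + 1 + i` telescopes to equality. -/
theorem mul_prod_le_add_mul_prod_sub_one (a r : ℕ) (q : ℕ → ℕ)
    (hq : ∀ i < r, a + 1 + i ≤ q i) :
    a * ∏ i ∈ range r, q i ≤ (a + r) * ∏ i ∈ range r, (q i - 1) := by
  induction r with
  | zero => simp
  | succ r ih =>
    have hqr := hq r (Nat.lt_succ_self r)
    have hfactor : (a + r) * q r ≤ (a + (r + 1)) * (q r - 1) := by
      obtain ⟨s, hs⟩ : ∃ s, q r = s + 1 := ⟨q r - 1, by omega⟩
      rw [hs] at hqr ⊢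
      rw [Nat.add_sub_cancel]
      nlinarith
    calc a * ∏ i ∈ range (r + 1), q i
        = (a * ∏ i ∈ range r, q i) * q r := by rw [prod_range_succ, mul_assoc]
      _ ≤ ((a + r) * ∏ i ∈ range r, (q i - 1)) * q r :=
          Nat.mul_le_mul_right _ (ih fun i hi => hq i (by omega))
      _ = ((a + r) * q r) * ∏ i ∈ range r, (q i - 1) := by ring
      _ ≤ ((a + (r + 1)) * (q r - 1)) * ∏ i ∈ range r, (q i - 1) :=
          Nat.mul_le_mul_right _ hfactor
      _ = (a + (r + 1)) * ∏ i ∈ range (r + 1), (q i - 1) := by rw [prod_range_succ]; ring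

theorem Nat.even_of_mul_totient_eq {k n : ℕ} (hn : 2 < n) (h : k * φ n = n) : Even n :=
  h ▸ (Nat.totient_even hn).mul_left k

theorem eq_two_of_even_prod_primes {p : ℕ → ℕ} {r : ℕ} (hp : ∀ i < r, (p i).Prime)
    (hmono : MonotoneOn p (Set.Iio r)) (hr : 0 < r) (heven : Even (∏ i ∈ range r, p i)) :
    p 0 = 2 := by
  obtain ⟨i, hi, hdvd⟩ := Nat.prime_two.prime.exists_mem_finset_dvd heven.two_dvd
  rw [mem_range] at hi
  have hpi : p i = 2 := ((Nat.prime_dvd_prime_iff_eq Nat.prime_two (hp i hi)).1 hdvd).symm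
  have : p 0 ≤ p i := hmono (show 0 < r from hr) hi (Nat.zero_le i)
  have := (hp 0 hr).two_le
  omega

theorem stmt_2 (r : ℕ) (hr : 1 ≤ r) (p : ℕ → ℕ)
    (hp : ∀ i < r, (p i).Prime)
    (hmono : ∀ i j, i < j → j < r → p i < p j)
    (hge : r + 2 ≤ 2 * p 0) :
    3 * Nat.totient (∏ i ∈ Finset.range r, p i) ≥ ∏ i ∈ Finset.range r, p i ∧
    (3 * Nat.totient (∏ i ∈ Finset.range r, p i) = ∏ i ∈ Finset.range r, p i ↔
      r = 2 ∧ p 0 = 2 ∧ p 1 = 3) := by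
  set N := ∏ i ∈ range r, p i with hN
  have hstrict : StrictMonoOn p (Set.Iio r) := fun i _ j hj hij => hmono i j hij hj
  have htot : φ N = ∏ i ∈ range r, (p i - 1) :=
    Nat.totient_prod_of_prime _ p (fun i hi => hp i (mem_range.1 hi))
      (by simpa only [coe_range] using hstrict.injOn)
  have hp0 := (hp 0 hr).two_le
  have hbound : (p 0 - 1) * N ≤ (p 0 - 1 + r) * φ N :=
    htot ▸ mul_prod_le_add_mul_prod_sub_one (p 0 - 1) r p fun i hi => by
      have := hstrict.add_le_nat hi
      omega
  have hle : N ≤ 3 * φ N := by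
    refine Nat.le_of_mul_le_mul_left ?_ (show 0 < p 0 - 1 by omega)
    calc (p 0 - 1) * N ≤ (p 0 - 1 + r) * φ N := hbound
      _ ≤ (3 * (p 0 - 1)) * φ N := Nat.mul_le_mul_right _ (by omega)
      _ = (p 0 - 1) * (3 * φ N) := by ring
  refine ⟨hle, fun heq => ?_, ?_⟩
  · have hpos : 0 < N := prod_pos fun i hi => (hp i (mem_range.1 hi)).pos
    have h2 : p 0 = 2 := eq_two_of_even_prod_primes hp hstrict.monotoneOn hr <|
      Nat.even_of_mul_totient_eq (by have := Nat.totient_pos.2 hpos; omega) heq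
    rw [htot, hN] at heq
    obtain rfl | rfl : r = 1 ∨ r = 2 := by omega
    · simp [h2] at heq
    · norm_num [prod_range_succ, h2] at heq
      exact ⟨rfl, h2, by have := hmono 0 1 one_pos one_lt_two; omega⟩
  · rintro ⟨rfl, h0, h1⟩
    rw [htot, hN]
    simp [prod_range_succ, h0, h1]
end

section
/- Let r ≥ 3, n = p_1^{n_1}⋯p_r^{n_r} with primes p_1 < ... < p_r, a < b in [r] with n_b ≥ 3, and β defined as β_a^s = φ(n) + (n/(p_1⋯p_r))·(1/p_a^{s-1})·[ (p_1⋯p_r)/p_a + φ((p_1⋯p_r)/p_a)·(p_a^{s-1} − 2) ]. Suppose 2·φ((p_1⋯p_r)/p_a) < (p_1⋯p_r)/p_a and p_b^2·(p_b − p_a) + 2·φ(p_a) ≥ (r−1)·p_a. Then β_a^{n_a} > β_b^{n_b}. -/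
noncomputable def beta (r : ℕ) (p e : ℕ → ℕ) (a s : ℕ) : ℚ :=
  (Nat.totient (∏ i ∈ Finset.range r, p i ^ e i) : ℚ) +
    ((∏ i ∈ Finset.range r, p i ^ e i : ℕ) : ℚ) /
        ((∏ i ∈ Finset.range r, p i : ℕ) : ℚ) *
      (1 / (p a : ℚ) ^ (s - 1)) *
      (((∏ i ∈ Finset.range r, p i : ℕ) : ℚ) / (p a : ℚ) +
        (Nat.totient ((∏ i ∈ Finset.range r, p i) / p a) : ℚ) *
          ((p a : ℚ) ^ (s - 1) - 2))

/-!
Write `P = ∏ pᵢ = p_a p_b C` and `M_c = P / p_c`. Then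
`β_c^s = φ(n) + (n/P) (φ(M_c) + (M_c - 2 φ(M_c)) / p_c^(s-1))`, so `2 φ(M_a) < M_a` puts `β_a^{n_a}`
strictly above `φ(n) + (n/P) φ(M_a)`. For `β_b^{n_b}` to stay below that level it suffices that
`p_a C - 2 (p_a - 1) φ(C) ≤ (p_b - p_a) φ(C) p_b²`, using `p_b^(n_b-1) ≥ p_b²`. This follows from the
second hypothesis and `C ≤ (r - 1) φ(C)`, an instance of `m ≤ (ω(m) + 1) φ(m)`: for a set `S` of
integers `≥ 2`, adjoining a new maximum `M ≥ |S| + 2` multiplies `∏ q / ∏ (q - 1)` by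
`M / (M - 1) ≤ (|S| + 2) / (|S| + 1)`, so this ratio is at most `|S| + 1`.
-/

open Finset
open scoped Nat

theorem Finset.prod_le_card_add_one_mul_prod_sub_one (s : Finset ℕ) (hs : ∀ m ∈ s, 2 ≤ m) :
    ∏ m ∈ s, m ≤ (#s + 1) * ∏ m ∈ s, (m - 1) := by
  induction s using Finset.induction_on_max with
  | empty => simp
  | insert M s hlt ih =>
    have hM : M ∉ s := fun h => (hlt M h).false
    have hs' : ∀ m ∈ s, 2 ≤ m := fun m hm => hs m (mem_insert_of_mem hm)
    have hcard : #s + 2 ≤ M := by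
      have := card_le_card (fun m hm => mem_Ico.2 ⟨hs' m hm, hlt m hm⟩ : s ⊆ Ico 2 M)
      rw [Nat.card_Ico] at this
      have := hs M (mem_insert_self M s)
      omega
    rw [prod_insert hM, prod_insert hM, card_insert_of_notMem hM]
    calc M * ∏ m ∈ s, m ≤ M * ((#s + 1) * ∏ m ∈ s, (m - 1)) := Nat.mul_le_mul_left _ (ih hs')
      _ = (M * (#s + 1)) * ∏ m ∈ s, (m - 1) := by ring
      _ ≤ ((#s + 1 + 1) * (M - 1)) * ∏ m ∈ s, (m - 1) := by
          refine Nat.mul_le_mul_right _ ?_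
          obtain ⟨k, rfl⟩ : ∃ k, M = k + 2 := ⟨M - 2, by omega⟩
          rw [show k + 2 - 1 = k + 1 by omega]
          nlinarith
      _ = (#s + 1 + 1) * ((M - 1) * ∏ m ∈ s, (m - 1)) := by ring

theorem Nat.le_card_primeFactors_add_one_mul_totient (n : ℕ) :
    n ≤ (#n.primeFactors + 1) * φ n := by
  have hpos : 0 < ∏ q ∈ n.primeFactors, (q - 1) :=
    prod_pos fun q hq => Nat.sub_pos_of_lt (Nat.prime_of_mem_primeFactors hq).one_lt
  refine le_of_mul_le_mul_right ?_ hpos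
  calc n * ∏ q ∈ n.primeFactors, (q - 1) = φ n * ∏ q ∈ n.primeFactors, q :=
        (Nat.totient_mul_prod_primeFactors n).symm
    _ ≤ φ n * ((#n.primeFactors + 1) * ∏ q ∈ n.primeFactors, (q - 1)) :=
        Nat.mul_le_mul_left _ <| n.primeFactors.prod_le_card_add_one_mul_prod_sub_one
          fun q hq => (Nat.prime_of_mem_primeFactors hq).two_le
    _ = (#n.primeFactors + 1) * φ n * ∏ q ∈ n.primeFactors, (q - 1) := by ring

theorem one_div_pow_mul_add_mul_sub_two {K : Type*} [Field K] {q : K} (hq : q ≠ 0) (k : ℕ)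
    (x y : K) : 1 / q ^ k * (x + y * (q ^ k - 2)) = y + (x - 2 * y) / q ^ k := by
  field_simp
  ring

theorem add_div_lt_add_div_of_two_mul_lt {K : Type*} [Field K] [LinearOrder K]
    [IsStrictOrderedRing K] {x y x' y' u v : K} (hxy : 2 * y < x) (hu : 0 < u) (hv : 0 < v)
    (hx' : x' - 2 * y' ≤ (y - y') * v) : y' + (x' - 2 * y') / v < y + (x - 2 * y) / u :=
  calc y' + (x' - 2 * y') / v ≤ y' + (y - y') := by
        gcongr
        exact (div_le_iff₀ hv).2 hx'
    _ = y := by ring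
    _ < y + (x - 2 * y) / u := lt_add_of_pos_right _ (div_pos (by linarith) hu)

theorem beta_eq_of_prod_eq {r : ℕ} {p : ℕ → ℕ} (e : ℕ → ℕ) {c M : ℕ} (hc : p c ≠ 0)
    (hM : ∏ i ∈ range r, p i = p c * M) (s : ℕ) :
    beta r p e c s = φ (∏ i ∈ range r, p i ^ e i) +
      ((∏ i ∈ range r, p i ^ e i : ℕ) : ℚ) / ((∏ i ∈ range r, p i : ℕ) : ℚ) *
        (φ M + (M - 2 * φ M) / (p c : ℚ) ^ (s - 1)) := by
  have hcQ : (p c : ℚ) ≠ 0 := Nat.cast_ne_zero.2 hc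
  rw [beta, ← one_div_pow_mul_add_mul_sub_two hcQ, mul_assoc, hM,
    Nat.mul_div_cancel_left _ (Nat.pos_of_ne_zero hc), Nat.cast_mul, mul_div_cancel_left₀ _ hcQ]

theorem mul_le_two_mul_add_mul_pow {pa pb C D m k : ℕ} (hab : pa ≤ pb) (hpa : 1 ≤ pa)
    (hk : 2 ≤ k) (hC : C ≤ m * D) (hm : m * pa ≤ pb ^ 2 * (pb - pa) + 2 * (pa - 1)) :
    pa * C ≤ 2 * ((pa - 1) * D) + (pb - pa) * D * pb ^ k :=
  calc pa * C ≤ (m * pa) * D := by rw [mul_comm m, mul_assoc]; exact Nat.mul_le_mul_left _ hC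
    _ ≤ (pb ^ 2 * (pb - pa) + 2 * (pa - 1)) * D := Nat.mul_le_mul_right _ hm
    _ = 2 * ((pa - 1) * D) + (pb - pa) * D * pb ^ 2 := by ring
    _ ≤ 2 * ((pa - 1) * D) + (pb - pa) * D * pb ^ k := by
        gcongr
        omega

theorem totient_add_div_lt {pa pb C m : ℕ} (hpa : pa.Prime) (hpb : pb.Prime) (hab : pa < pb)
    (hna : ¬pa ∣ C) (hnb : ¬pb ∣ C) (hC : C ≤ m * φ C)
    (hm : m * pa ≤ pb ^ 2 * (pb - pa) + 2 * (pa - 1)) (hphi : 2 * φ (pb * C) < pb * C)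
    {k : ℕ} (hk : 2 ≤ k) (l : ℕ) :
    (φ (pa * C) : ℚ) + ((pa * C : ℕ) - 2 * φ (pa * C)) / (pb : ℚ) ^ k <
      φ (pb * C) + ((pb * C : ℕ) - 2 * φ (pb * C)) / (pa : ℚ) ^ l := by
  refine add_div_lt_add_div_of_two_mul_lt (by exact_mod_cast hphi)
    (pow_pos (Nat.cast_pos.2 hpa.pos) l) (pow_pos (Nat.cast_pos.2 hpb.pos) k) ?_
  have hbound := mul_le_two_mul_add_mul_pow hab.le hpa.one_le hk hC hm
  rw [Nat.totient_mul_of_prime_of_not_dvd hpa hna, Nat.totient_mul_of_prime_of_not_dvd hpb hnb]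
  qify [hpa.one_le, hpb.one_le, hab.le] at hbound ⊢
  linarith

theorem exists_prod_eq_mul_mul {ι : Type*} [DecidableEq ι] {s : Finset ι} {p : ι → ℕ}
    (hp : ∀ i ∈ s, (p i).Prime) (hinj : Set.InjOn p s) {a b : ι} (ha : a ∈ s) (hb : b ∈ s)
    (hab : a ≠ b) :
    ∃ C, ∏ i ∈ s, p i = p a * (p b * C) ∧ ¬p a ∣ C ∧ ¬p b ∣ C ∧ C ≤ (#s - 1) * φ C := by
  set t := (s.erase a).erase b
  have hbt : b ∈ s.erase a := mem_erase.2 ⟨hab.symm, hb⟩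
  have hts : t ⊆ s := (erase_subset _ _).trans (erase_subset _ _)
  have hfac : (∏ i ∈ t, p i).primeFactors = t.image p := by
    calc (∏ i ∈ t, p i).primeFactors = (∏ q ∈ t.image p, q).primeFactors := by
          rw [prod_image (hinj.mono hts)]
      _ = t.image p := Nat.primeFactors_prod <| by simpa using fun i hi => hp i (hts hi)
  have hndvd : ∀ c ∈ s, c ∉ t → ¬p c ∣ ∏ i ∈ t, p i := by
    intro c hc hct hdvd
    have hne : ∏ i ∈ t, p i ≠ 0 := prod_ne_zero_iff.2 fun i hi => (hp i (hts hi)).ne_zero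
    obtain ⟨i, hi, hic⟩ := mem_image.1 (hfac ▸ Nat.mem_primeFactors.2 ⟨hp c hc, hdvd, hne⟩)
    exact hct (hinj (hts hi) hc hic ▸ hi)
  refine ⟨∏ i ∈ t, p i, by rw [← mul_prod_erase _ _ ha, ← mul_prod_erase _ _ hbt],
    hndvd a ha (by simp [t]), hndvd b hb (by simp [t]), ?_⟩
  have hcard : #t = #s - 2 := by
    rw [card_erase_of_mem hbt, card_erase_of_mem ha]; rfl
  have := Nat.le_card_primeFactors_add_one_mul_totient (∏ i ∈ t, p i)
  rwa [hfac, card_image_of_injOn (hinj.mono hts), hcard,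
    show #s - 2 + 1 = #s - 1 by have := one_lt_card.2 ⟨a, ha, b, hb, hab⟩; omega] at this

theorem stmt_15_general (r : ℕ) (p e : ℕ → ℕ)
    (hp : ∀ i < r, (p i).Prime)
    (hmono : ∀ i j, i < j → j < r → p i < p j)
    (a b : ℕ) (hab : a < b) (hb : b < r) (heb : 3 ≤ e b)
    (hphi : 2 * Nat.totient ((∏ i ∈ Finset.range r, p i) / p a) <
      (∏ i ∈ Finset.range r, p i) / p a)
    (hineq : p b ^ 2 * (p b - p a) + 2 * Nat.totient (p a) ≥ (r - 1) * p a) :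
    beta r p e a (e a) > beta r p e b (e b) := by
  have hpa := hp a (hab.trans hb)
  have hpb := hp b hb
  have hinj : Set.InjOn p (range r) := by
    rw [coe_range]
    exact StrictMonoOn.injOn fun i _ j hj hij => hmono i j hij hj
  obtain ⟨C, hP, hna, hnb, hC⟩ := exists_prod_eq_mul_mul (fun i hi => hp i (mem_range.1 hi))
    hinj (mem_range.2 (hab.trans hb)) (mem_range.2 hb) hab.ne
  rw [card_range] at hC
  rw [hP, Nat.mul_div_cancel_left _ hpa.pos] at hphi
  rw [Nat.totient_prime hpa] at hineq
  have hpos : (0 : ℚ) < ((∏ i ∈ range r, p i ^ e i : ℕ) : ℚ) / ((∏ i ∈ range r, p i : ℕ) : ℚ) :=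
    div_pos (Nat.cast_pos.2 (prod_pos fun i hi => pow_pos (hp i (mem_range.1 hi)).pos _))
      (Nat.cast_pos.2 (prod_pos fun i hi => (hp i (mem_range.1 hi)).pos))
  rw [gt_iff_lt, beta_eq_of_prod_eq e hpb.ne_zero (hP.trans (mul_left_comm _ _ _)),
    beta_eq_of_prod_eq e hpa.ne_zero hP]
  exact add_lt_add_right (mul_lt_mul_of_pos_left
    (totient_add_div_lt hpa hpb (hmono a b hab hb) hna hnb hC hineq hphi (by omega) _) hpos) _

theorem stmt_15 (r : ℕ) (hr : 3 ≤ r) (p e : ℕ → ℕ)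
    (hp : ∀ i < r, (p i).Prime)
    (hmono : ∀ i j, i < j → j < r → p i < p j)
    (he : ∀ i < r, 1 ≤ e i)
    (a b : ℕ) (hab : a < b) (hb : b < r) (heb : 3 ≤ e b)
    (hphi : 2 * Nat.totient ((∏ i ∈ Finset.range r, p i) / p a) <
      (∏ i ∈ Finset.range r, p i) / p a)
    (hineq : p b ^ 2 * (p b - p a) + 2 * Nat.totient (p a) ≥ (r - 1) * p a) :
    beta r p e a (e a) > beta r p e b (e b) :=
  stmt_15_general r p e hp hmono a b hab hb heb hphi hineq
end

section
/- Let r ≥ 3, n = p_1^{n_1}⋯p_r^{n_r} with primes p_1 < ... < p_r, a ∈ [r−1], n_r ≥ 3, and β defined as β_a^s = φ(n) + (n/(p_1⋯p_r))·(1/p_a^{s-1})·[ (p_1⋯p_r)/p_a + φ((p_1⋯p_r)/p_a)·(p_a^{s-1} − 2) ]. If 2·φ((p_1⋯p_r)/p_a) < (p_1⋯p_r)/p_a, then β_a^{n_a} > β_r^{n_r}. -/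
open Finset
open scoped Nat

theorem Nat.totient_prod_of_injOn_prime {ι : Type*} {s : Finset ι} {p : ι → ℕ}
    (hp : ∀ i ∈ s, (p i).Prime) (hinj : Set.InjOn p s) :
    φ (∏ i ∈ s, p i) = ∏ i ∈ s, (p i - 1) := by
  classical
  induction s using Finset.induction_on with
  | empty => simp
  | insert j s hj ih =>
    have hcop : (p j).Coprime (∏ i ∈ s, p i) := Coprime.prod_right fun i hi =>
      (coprime_primes (hp j (mem_insert_self j s)) (hp i (mem_insert_of_mem hi))).mpr
        fun hji => hj (hinj (by simp) (by simp [hi]) hji ▸ hi)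
    rw [prod_insert hj, prod_insert hj, totient_mul hcop, totient_prime (hp j (mem_insert_self j s)),
      ih (fun i hi => hp i (mem_insert_of_mem hi)) (hinj.mono (by simp))]

theorem Finset.prod_le_mul_prod_sub_one_of_subset_Icc {K : Type*} [Field K] [LinearOrder K]
    [IsStrictOrderedRing K] {s : Finset ℕ} {m : ℕ} (hm : 1 ≤ m) (hs : s ⊆ Icc 2 m) :
    ∏ q ∈ s, (q : K) ≤ m * ∏ q ∈ s, ((q : K) - 1) := by
  induction s using Finset.induction_on_max generalizing m with
  | empty => simpa using hm
  | insert a s hlt ih =>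
    obtain ⟨ha2, ham⟩ := mem_Icc.mp (hs (mem_insert_self a s))
    have has : a ∉ s := fun h => (hlt a h).false
    have hsub : s ⊆ Icc 2 (a - 1) := fun q hq =>
      mem_Icc.mpr ⟨(mem_Icc.mp (hs (mem_insert_of_mem hq))).1, Nat.le_sub_one_of_lt (hlt q hq)⟩
    have hih : ∏ q ∈ s, (q : K) ≤ (a - 1) * ∏ q ∈ s, ((q : K) - 1) := by
      simpa [Nat.cast_sub (by omega : 1 ≤ a)] using ih (by omega) hsub
    have hrest : 0 ≤ ((a : K) - 1) * ∏ q ∈ s, ((q : K) - 1) := by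
      refine mul_nonneg (sub_nonneg.mpr (by exact_mod_cast (by omega : 1 ≤ a)))
        (prod_nonneg fun q hq => sub_nonneg.mpr ?_)
      exact_mod_cast (by have := (mem_Icc.mp (hsub hq)).1; omega : 1 ≤ q)
    rw [prod_insert has, prod_insert has]
    calc (a : K) * ∏ q ∈ s, (q : K) ≤ a * ((a - 1) * ∏ q ∈ s, ((q : K) - 1)) :=
          mul_le_mul_of_nonneg_left hih (by positivity)
      _ ≤ m * ((a - 1) * ∏ q ∈ s, ((q : K) - 1)) :=
          mul_le_mul_of_nonneg_right (by exact_mod_cast ham) hrest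

section PairQuotient

variable {ι : Type*} [DecidableEq ι] {s : Finset ι} {p : ι → ℕ} {i j : ι}

theorem prod_div_eq_mul_prod_sdiff_pair (hi : i ∈ s) (hj : j ∈ s) (hij : i ≠ j) (hpi : 0 < p i) :
    (∏ k ∈ s, p k) / p i = p j * ∏ k ∈ s \ {i, j}, p k := by
  rw [← prod_sdiff (insert_subset hi (singleton_subset_iff.mpr hj)), prod_pair hij,
    mul_comm, mul_assoc, Nat.mul_div_cancel_left _ hpi]

theorem cast_prod_div_eq_mul_prod_sdiff_pair (hi : i ∈ s) (hj : j ∈ s) (hij : i ≠ j)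
    (hpi : 0 < p i) :
    ((∏ k ∈ s, p k : ℕ) : ℚ) / p i = p j * ∏ k ∈ s \ {i, j}, (p k : ℚ) := by
  rw [← Nat.cast_div (dvd_prod_of_mem p hi) (by exact_mod_cast hpi.ne'),
    prod_div_eq_mul_prod_sdiff_pair hi hj hij hpi]
  push_cast
  rfl

theorem cast_totient_prod_div_eq_mul_prod_sdiff_pair (hp : ∀ k ∈ s, (p k).Prime)
    (hinj : Set.InjOn p s) (hi : i ∈ s) (hj : j ∈ s) (hij : i ≠ j) :
    (φ ((∏ k ∈ s, p k) / p i) : ℚ) = (p j - 1) * ∏ k ∈ s \ {i, j}, ((p k : ℚ) - 1) := by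
  have hj' : j ∉ s \ {i, j} := by simp
  have hsub : insert j (s \ {i, j}) ⊆ s := insert_subset hj sdiff_subset
  rw [prod_div_eq_mul_prod_sdiff_pair hi hj hij (hp i hi).pos, ← prod_insert hj',
    Nat.totient_prod_of_injOn_prime (fun k hk => hp k (hsub hk)) (hinj.mono hsub),
    Nat.cast_prod, prod_insert hj', Nat.cast_pred (hp j hj).pos]
  exact congrArg _ (prod_congr rfl fun k hk => Nat.cast_pred (hp k (sdiff_subset hk)).pos)

end PairQuotient

theorem prod_range_sdiff_pair_le_mul_prod_sub_one {r a : ℕ} {p : ℕ → ℕ}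
    (hp : ∀ i < r, (p i).Prime) (hmono : ∀ i j, i < j → j < r → p i < p j) (ha : a < r - 1) :
    ∏ k ∈ range r \ {a, r - 1}, (p k : ℚ) ≤
      (p (r - 1) - 1) * ∏ k ∈ range r \ {a, r - 1}, ((p k : ℚ) - 1) := by
  have hinj : Set.InjOn p ↑(range r \ {a, r - 1}) :=
    StrictMonoOn.injOn fun i hi j hj hij => hmono i j hij (mem_range.mp (mem_sdiff.mp hj).1)
  have hsub : (range r \ {a, r - 1}).image p ⊆ Icc 2 (p (r - 1) - 1) := by
    intro q hq
    obtain ⟨k, hk, rfl⟩ := mem_image.mp hq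
    simp only [mem_sdiff, mem_range, mem_insert, mem_singleton, not_or] at hk
    have := hmono k (r - 1) (by omega) (by omega)
    exact mem_Icc.mpr ⟨(hp k hk.1).two_le, by omega⟩
  have hm : 1 ≤ p (r - 1) - 1 := by have := (hp (r - 1) (by omega)).two_le; omega
  have := prod_le_mul_prod_sub_one_of_subset_Icc (K := ℚ) hm hsub
  rwa [prod_image hinj, prod_image hinj, Nat.cast_pred (by omega)] at this

theorem beta_eq_of_ne {r : ℕ} {p : ℕ → ℕ} (e : ℕ → ℕ) {i j : ℕ}
    (hp : ∀ k ∈ range r, (p k).Prime) (hinj : Set.InjOn p (range r))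
    (hi : i ∈ range r) (hj : j ∈ range r) (hij : i ≠ j) (s : ℕ) :
    beta r p e i s = φ (∏ k ∈ range r, p k ^ e k) +
      ((∏ k ∈ range r, p k ^ e k : ℕ) : ℚ) / ((∏ k ∈ range r, p k : ℕ) : ℚ) *
        (1 / (p i : ℚ) ^ (s - 1) * (p j * ∏ k ∈ range r \ {i, j}, (p k : ℚ) +
          (p j - 1) * (∏ k ∈ range r \ {i, j}, ((p k : ℚ) - 1)) * ((p i : ℚ) ^ (s - 1) - 2))) := by
  rw [beta, cast_prod_div_eq_mul_prod_sdiff_pair hi hj hij (hp i hi).pos,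
    cast_totient_prod_div_eq_mul_prod_sdiff_pair hp hinj hi hj hij, mul_assoc]

section Bracket

variable {K : Type*} [Field K]

theorem one_div_mul_add_mul_sub_two {A T x : K} (hx : x ≠ 0) :
    1 / x * (A + T * (x - 2)) = T + (A - 2 * T) / x := by
  field_simp
  ring

theorem one_div_mul_add_mul_sub_two_lt [LinearOrder K] [IsStrictOrderedRing K]
    {qa qR Pi Q x y : K} (hqa : 1 ≤ qa) (hlt : qa + 1 ≤ qR) (hPi : Pi ≤ (qR - 1) * Q)
    (hQ : 0 ≤ Q) (hx : 0 < x) (hy : qR ^ 2 ≤ y) (h : 2 * ((qR - 1) * Q) < qR * Pi) :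
    1 / y * (qa * Pi + (qa - 1) * Q * (y - 2)) < 1 / x * (qR * Pi + (qR - 1) * Q * (x - 2)) := by
  have hy0 : 0 < y := lt_of_lt_of_le (by nlinarith) hy
  rw [one_div_mul_add_mul_sub_two hy0.ne', one_div_mul_add_mul_sub_two hx.ne']
  have hTa : 0 ≤ (qa - 1) * Q := mul_nonneg (by linarith) hQ
  have hAa : qa * Pi ≤ y * Q := calc
    qa * Pi ≤ qa * ((qR - 1) * Q) := mul_le_mul_of_nonneg_left hPi (by linarith)
    _ ≤ qR ^ 2 * Q := by rw [← mul_assoc]; exact mul_le_mul_of_nonneg_right (by nlinarith) hQ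
    _ ≤ y * Q := mul_le_mul_of_nonneg_right hy hQ
  have hsmall : (qa * Pi - 2 * ((qa - 1) * Q)) / y ≤ Q := by
    rw [div_le_iff₀ hy0]
    linarith
  have hpos : 0 < (qR * Pi - 2 * ((qR - 1) * Q)) / x := div_pos (by linarith) hx
  have hgap : (qa - 1) * Q + Q ≤ (qR - 1) * Q := by nlinarith
  linarith

end Bracket

theorem stmt_16_general (r : ℕ) (p e : ℕ → ℕ)
    (hp : ∀ i < r, (p i).Prime)
    (hmono : ∀ i j, i < j → j < r → p i < p j)
    (a : ℕ) (ha : a < r - 1) (her : 3 ≤ e (r - 1))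
    (hphi : 2 * Nat.totient ((∏ i ∈ Finset.range r, p i) / p a) <
      (∏ i ∈ Finset.range r, p i) / p a) :
    beta r p e a (e a) > beta r p e (r - 1) (e (r - 1)) := by
  have hp' : ∀ i ∈ range r, (p i).Prime := fun i hi => hp i (mem_range.mp hi)
  have hinj : Set.InjOn p (range r) :=
    StrictMonoOn.injOn fun i _ j hj hij => hmono i j hij (mem_range.mp hj)
  have hamem : a ∈ range r := mem_range.mpr (by omega)
  have hRmem : r - 1 ∈ range r := mem_range.mpr (by omega)
  have haR : a ≠ r - 1 := by omega
  have hphiQ := Nat.cast_lt (α := ℚ) |>.mpr hphi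
  rw [Nat.cast_mul, Nat.cast_ofNat,
    Nat.cast_div (dvd_prod_of_mem p hamem) (by exact_mod_cast (hp' a hamem).ne_zero),
    cast_prod_div_eq_mul_prod_sdiff_pair hamem hRmem haR (hp' a hamem).pos,
    cast_totient_prod_div_eq_mul_prod_sdiff_pair hp' hinj hamem hRmem haR] at hphiQ
  have hN : (0 : ℚ) < ((∏ i ∈ range r, p i ^ e i : ℕ) : ℚ) / ((∏ i ∈ range r, p i : ℕ) : ℚ) :=
    div_pos (by exact_mod_cast prod_pos fun i hi => pow_pos (hp' i hi).pos (e i))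
      (by exact_mod_cast prod_pos fun i hi => (hp' i hi).pos)
  have hQ : 0 ≤ ∏ k ∈ range r \ {a, r - 1}, ((p k : ℚ) - 1) :=
    prod_nonneg fun k hk => sub_nonneg.mpr (by exact_mod_cast (hp' k (sdiff_subset hk)).one_le)
  rw [beta_eq_of_ne e hp' hinj hamem hRmem haR, beta_eq_of_ne e hp' hinj hRmem hamem haR.symm,
    pair_comm (r - 1) a, gt_iff_lt, add_lt_add_iff_left]
  exact mul_lt_mul_of_pos_left (one_div_mul_add_mul_sub_two_lt
    (by exact_mod_cast (hp' a hamem).one_le) (by exact_mod_cast hmono a (r - 1) ha (by omega))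
    (prod_range_sdiff_pair_le_mul_prod_sub_one hp hmono ha) hQ
    (pow_pos (by exact_mod_cast (hp' a hamem).pos) _)
    (pow_le_pow_right₀ (by exact_mod_cast (hp' _ hRmem).one_le) (by omega)) hphiQ) hN

theorem stmt_16 (r : ℕ) (hr : 3 ≤ r) (p e : ℕ → ℕ)
    (hp : ∀ i < r, (p i).Prime)
    (hmono : ∀ i j, i < j → j < r → p i < p j)
    (he : ∀ i < r, 1 ≤ e i)
    (a : ℕ) (ha : a < r - 1) (her : 3 ≤ e (r - 1))
    (hphi : 2 * Nat.totient ((∏ i ∈ Finset.range r, p i) / p a) <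
      (∏ i ∈ Finset.range r, p i) / p a) :
    beta r p e a (e a) > beta r p e (r - 1) (e (r - 1)) :=
  stmt_16_general r p e hp hmono a ha her hphi
end
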